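/- Let G=(V,E) be a DAG, let u,v,x be distinct vertices, and let W ⊆ V∖{u,v,x}. If u and v are d-separated given W in G but d-connected given W∪{x} in G, then x and u are d-connected given W in G, and x and v are d-connected given W in G. -/

import Mathlib

/-! Basic graphical-model definitions: DAGs as binary relations on a finite
vertex type, d-separation via paths (lists of vertices), Markov equivalence,
and definite (non-)ancestral relations. -/

variable {V : Type*}

/-- Two nodes are adjacent in the digraph `E` if there is an edge between them
in either direction. -/
def Adjacent (E : V → V → Prop) (a b : V) : Prop := E a b ∨ E b a

/-- A digraph is acyclic if it has no directed cycles. -/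
def Acyclic (E : V → V → Prop) : Prop := ∀ v : V, ¬ Relation.TransGen E v v

/-- `u` is an ancestor of `v`: there is a directed path from `u` to `v`
(by convention, `v` is an ancestor of itself). -/
def Anc (E : V → V → Prop) (u v : V) : Prop := Relation.ReflTransGen E u v

/-- A list of vertices is a path in the skeleton of `E`: consecutive vertices
are adjacent and no vertex repeats. -/
def IsPath (E : V → V → Prop) (p : List V) : Prop :=
  p.Nodup ∧ List.Chain' (Adjacent E) p

/-- A path `p` is d-connecting given the conditioning set `C` if every collider
on it is an ancestor of an element of `C` and every non-collider on it is
outside `C`.  Interior vertices of `p` are exactly the middle elements `x` of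
consecutive triples `[a, x, b]` of `p`; such an `x` is a collider when both
incident edges point into it. -/
def IsDConnectingPath (E : V → V → Prop) (C : Set V) (p : List V) : Prop :=
  ∀ a x b : V, [a, x, b] <:+: p →
    ((E a x ∧ E b x) → ∃ c ∈ C, Anc E x c) ∧ (¬ (E a x ∧ E b x) → x ∉ C)

/-- `u` and `v` are d-connected given `C` in `E`. -/
def DConn (E : V → V → Prop) (C : Set V) (u v : V) : Prop :=
  ∃ p : List V, IsPath E p ∧ p.head? = some u ∧ p.getLast? = some v ∧
    IsDConnectingPath E C p

/-- `u` and `v` are d-separated given `C` in `E`. -/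
def DSep (E : V → V → Prop) (C : Set V) (u v : V) : Prop := ¬ DConn E C u v

/-- Two DAGs on the same vertex set are Markov equivalent if they have exactly
the same d-separation relations. -/
def MarkovEquiv (E E' : V → V → Prop) : Prop :=
  ∀ (u v : V) (C : Set V), u ≠ v → u ∉ C → v ∉ C → (DSep E C u v ↔ DSep E' C u v)

/-- `u` is definite ancestral to `v` (`u ⇝ v`): `u` is an ancestor of `v` in
every DAG Markov equivalent to `E`. -/
def DefAnc (E : V → V → Prop) (u v : V) : Prop :=
  ∀ E' : V → V → Prop, Acyclic E' → MarkovEquiv E E' → Anc E' u v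

/-- `u` is definite non-ancestral to `v` (`u ̸⇝ v`): `u` is not an ancestor of
`v` in any DAG Markov equivalent to `E`. -/
def DefNonAnc (E : V → V → Prop) (u v : V) : Prop :=
  ∀ E' : V → V → Prop, Acyclic E' → MarkovEquiv E E' → ¬ Anc E' u v

/-- The CPDAG of `E` has a directed edge `a → b` iff `a` and `b` are adjacent
and the edge is oriented `a → b` in every member of the Markov equivalence
class of `E`. -/
def CPDAGDir (E : V → V → Prop) (a b : V) : Prop :=
  Adjacent E a b ∧ ∀ E' : V → V → Prop, Acyclic E' → MarkovEquiv E E' → E' a b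

/-- A possibly directed path in the CPDAG of `E`: a path in the skeleton such
that no edge on it is directed backwards (as `x_{i+1} → x_i`) in the CPDAG. -/
def IsPossiblyDirectedPath (E : V → V → Prop) (p : List V) : Prop :=
  p.Nodup ∧ List.Chain' (fun a b => Adjacent E a b ∧ ¬ CPDAGDir E b a) p

/-- A path is unshielded if no three consecutive vertices on it are pairwise
adjacent. -/
def UnshieldedPath (E : V → V → Prop) (p : List V) : Prop :=
  ∀ a x b : V, [a, x, b] <:+: p → ¬ Adjacent E a b

/-! Take a path `p` that d-connects `u` and `v` given `W ∪ {x}`. As `u` and `v` are d-separated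
given `W`, some collider on `p` is an ancestor of `x` but of no vertex of `W`; for the first such
collider `c`, seen from `u`, the segment of `p` from `u` to `c` is d-connecting given `W`. Follow a
directed path from `c` to `x` and let `z` be its last vertex on that segment. The segment from `u`
to `z`, followed by the directed path from `z` to `x`, is d-connecting given `W`: the new interior
vertices have an outgoing edge along the path, so they are non-colliders, and as descendants of `c`
they lie outside `W`. -/

theorem List.exists_eq_append_cons_of_last {α : Type*} {P : α → Prop} :
    ∀ {l : List α}, (∃ a ∈ l, P a) → ∃ l₁ z l₂, l = l₁ ++ z :: l₂ ∧ P z ∧ ∀ b ∈ l₂, ¬ P b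
  | [], ⟨_, ha, _⟩ => absurd ha List.not_mem_nil
  | a :: l, ⟨b, hb, hPb⟩ => by
    by_cases hl : ∃ b ∈ l, P b
    · obtain ⟨l₁, z, l₂, rfl, hz, hl₂⟩ := List.exists_eq_append_cons_of_last hl
      exact ⟨a :: l₁, z, l₂, rfl, hz, hl₂⟩
    · push Not at hl
      obtain rfl | hb := List.mem_cons.mp hb
      · exact ⟨[], b, l, rfl, hPb, hl⟩
      · exact absurd hPb (hl b hb)

/-- `IsDConnectingPath E C p` unfolds to: every consecutive triple of `p` is active. -/
def ActiveTriple (E : V → V → Prop) (C : Set V) (a x b : V) : Prop :=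
  ((E a x ∧ E b x) → ∃ c ∈ C, Anc E x c) ∧ (¬ (E a x ∧ E b x) → x ∉ C)

section DSeparation

variable {E : V → V → Prop} {C : Set V}

theorem ActiveTriple.symm {a x b : V} (h : ActiveTriple E C a x b) : ActiveTriple E C b x a :=
  ⟨fun hcol => h.1 hcol.symm, fun hncol => h.2 fun hcol => hncol hcol.symm⟩

theorem Acyclic.nodup_of_isChain (hE : Acyclic E) {l : List V} (hl : l.IsChain E) : l.Nodup :=
  (hl.imp fun _ _ => .single).pairwise.imp
    fun {a b} (hab : Relation.TransGen E a b) (heq : a = b) => hE b (heq ▸ hab)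

theorem activeTriple_of_rel (hE : Acyclic E) {a x b : V} (hxb : E x b) (hx : x ∉ C) :
    ActiveTriple E C a x b :=
  ⟨fun hcol => absurd (.head hxb (.single hcol.2)) (hE x), fun _ => hx⟩

theorem ActiveTriple.anc_of_union_singleton {a m b x : V} (h : ActiveTriple E (C ∪ {x}) a m b)
    (hC : ¬ ActiveTriple E C a m b) : Anc E m x ∧ ∀ c ∈ C, ¬ Anc E m c := by
  by_cases hcol : E a m ∧ E b m
  · have hnC : ∀ c ∈ C, ¬ Anc E m c := fun c hc hmc =>
      hC ⟨fun _ => ⟨c, hc, hmc⟩, fun hncol => absurd hcol hncol⟩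
    obtain ⟨c, hc | rfl, hmc⟩ := h.1 hcol
    · exact absurd hmc (hnC c hc)
    · exact ⟨hmc, hnC⟩
  · exact absurd ⟨fun hcol' => absurd hcol' hcol, fun _ hm => h.2 hcol (Or.inl hm)⟩ hC

theorem IsDConnectingPath.infix {p q : List V} (hp : IsDConnectingPath E C p) (hq : q <:+: p) :
    IsDConnectingPath E C q :=
  fun a x b h => hp a x b (h.trans hq)

theorem IsDConnectingPath.reverse {p : List V} (hp : IsDConnectingPath E C p) :
    IsDConnectingPath E C p.reverse := fun a x b h =>
  ActiveTriple.symm (hp b x a (List.reverse_infix.mp (by simpa using h)))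

theorem isDConnectingPath_concat_iff {q : List V} {y : V} :
    IsDConnectingPath E C (q ++ [y]) ↔
      IsDConnectingPath E C q ∧ ∀ a x, [a, x] <:+ q → ActiveTriple E C a x y := by
  refine ⟨fun h => ⟨h.infix (List.prefix_append q [y]).isInfix, fun a x ⟨s, hs⟩ =>
    h a x y ⟨s, [], by simp [← hs]⟩⟩, ?_⟩
  rintro ⟨hq, hlast⟩ a x b h
  rcases List.infix_concat_iff.mp h with h | h
  · obtain ⟨t, ht, hts⟩ := (List.suffix_concat_iff.mp h).resolve_left (List.cons_ne_nil _ _)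
    obtain ⟨rfl, hby⟩ := List.append_inj' (show [a, x] ++ [b] = t ++ [y] from ht) rfl
    obtain rfl : b = y := List.singleton_inj.mp hby
    exact hlast a x hts
  · exact hq a x b h

theorem IsDConnectingPath.append_directed (hE : Acyclic E) {l d : List V} {z : V}
    (hl : IsDConnectingPath E C (l ++ [z])) (hd : List.IsChain E (z :: d))
    (hdC : ∀ m ∈ z :: d, m ∉ C) : IsDConnectingPath E C (l ++ z :: d) := by
  induction d generalizing l z with
  | nil => exact hl
  | cons y d ih =>
    rw [show l ++ z :: y :: d = (l ++ [z]) ++ y :: d by simp]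
    refine ih ?_ hd.tail fun m hm => hdC m (List.mem_cons_of_mem z hm)
    refine isDConnectingPath_concat_iff.mpr ⟨hl, fun a x hx => ?_⟩
    obtain ⟨t, ht, -⟩ := (List.suffix_concat_iff.mp hx).resolve_left (List.cons_ne_nil _ _)
    obtain rfl : x = z := by
      have := congrArg List.getLast? ht
      simpa using this
    exact activeTriple_of_rel hE hd.rel (hdC x List.mem_cons_self)

theorem IsDConnectingPath.exists_prefix_of_union_singleton {p : List V} {x : V}
    (hp : IsDConnectingPath E (C ∪ {x}) p) (hpC : ¬ IsDConnectingPath E C p) :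
    ∃ q, q <+: p ∧ IsDConnectingPath E C q ∧ ∃ c ∈ q, Anc E c x ∧ ∀ w ∈ C, ¬ Anc E c w := by
  induction p using List.reverseRecOn with
  | nil => exact absurd (fun a m b h => by simp at h) hpC
  | append_singleton q y ih =>
    rw [isDConnectingPath_concat_iff] at hp hpC
    by_cases hq : IsDConnectingPath E C q
    · push Not at hpC
      obtain ⟨a, m, ham, hinactive⟩ := hpC hq
      exact ⟨q, List.prefix_append q [y], hq, m, ham.subset (by simp),
        (hp.2 a m ham).anc_of_union_singleton hinactive⟩
    · obtain ⟨r, hr, hrC, hc⟩ := ih hp.1 hq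
      exact ⟨r, hr.trans (List.prefix_append q [y]), hrC, hc⟩

theorem IsPath.reverse {p : List V} (hp : IsPath E p) : IsPath E p.reverse :=
  ⟨List.nodup_reverse.mpr hp.1, List.isChain_reverse.mpr (hp.2.imp fun _ _ h => h.symm)⟩

theorem IsPath.append_directed {l d : List V} {z : V} (hl : IsPath E (l ++ [z]))
    (hd : List.IsChain E (z :: d)) (hdnd : (z :: d).Nodup) (hdisj : ∀ a ∈ l, a ∉ d) :
    IsPath E (l ++ z :: d) := by
  refine ⟨List.nodup_append.mpr ⟨(List.nodup_append.mp hl.1).1, hdnd, ?_⟩, ?_⟩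
  · rintro a ha b hb rfl
    obtain rfl | hb := List.mem_cons.mp hb
    · exact (List.nodup_append.mp hl.1).2.2 a ha a List.mem_cons_self rfl
    · exact hdisj a ha hb
  · show List.IsChain _ _
    simpa using hl.2.append_overlap (l₁ := l) (l₂ := [z]) (hd.imp fun _ _ h => Or.inl h)
      (List.cons_ne_nil _ _)

theorem DConn.symm {u v : V} (h : DConn E C u v) : DConn E C v u := by
  obtain ⟨p, hp, hu, hv, hpC⟩ := h
  exact ⟨p.reverse, hp.reverse, by simpa using hv, by simpa using hu, hpC.reverse⟩

theorem dConn_of_dSep_of_dConn_union_singleton (hE : Acyclic E) {u v x : V}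
    (hsep : DSep E C u v) (hconn : DConn E (C ∪ {x}) u v) : DConn E C u x := by
  obtain ⟨p, hpath, hu, hv, hp⟩ := hconn
  obtain ⟨P, hPp, hP, c, hcP, hcx, hcC⟩ :=
    hp.exists_prefix_of_union_singleton fun hpC => hsep ⟨p, hpath, hu, hv, hpC⟩
  obtain ⟨L, hL, hLx⟩ := List.exists_isChain_cons_of_relationReflTransGen hcx
  have hLC : ∀ m ∈ c :: L, m ∉ C := by
    intro m hm hmC
    obtain rfl | hm := List.mem_cons.mp hm
    · exact hcC m hmC .refl
    · exact hcC m hmC <| List.rel_of_pairwise_cons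
        (hL.imp fun _ _ => Relation.ReflTransGen.single).pairwise hm
  obtain ⟨L₁, z, L₂, hsplit, hzP, hL₂P⟩ :=
    List.exists_eq_append_cons_of_last (P := (· ∈ P)) ⟨c, List.mem_cons_self, hcP⟩
  have hzL₂ : z :: L₂ <:+ c :: L := ⟨L₁, hsplit.symm⟩
  obtain ⟨S₁, S₂, rfl⟩ := List.append_of_mem hzP
  have hS₁z : S₁ ++ [z] <+: S₁ ++ z :: S₂ := ⟨S₂, by simp⟩
  refine ⟨S₁ ++ z :: L₂, ?_, ?_, ?_, ?_⟩
  · refine IsPath.append_directed ?_ (hL.suffix hzL₂) (hE.nodup_of_isChain (hL.suffix hzL₂))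
      fun a ha haL₂ => hL₂P a haL₂ (by simp [ha])
    exact ⟨hpath.1.sublist (hS₁z.trans hPp).sublist, hpath.2.prefix (hS₁z.trans hPp)⟩
  · obtain ⟨t, rfl⟩ := hPp
    simpa [List.head?_append] using hu
  · have hzx := hzL₂.getLast (List.cons_ne_nil _ _)
    rw [hLx] at hzx
    simp [List.getLast?_eq_some_getLast, hzx]
  · exact (hP.infix hS₁z.isInfix).append_directed hE (hL.suffix hzL₂)
      fun m hm => hLC m (hzL₂.subset hm)

end DSeparation

theorem stmt14_general (E : V → V → Prop) (hE : Acyclic E) (u v x : V) (W : Set V)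
    (hsep : DSep E W u v) (hconn : DConn E (W ∪ {x}) u v) :
    DConn E W x u ∧ DConn E W x v :=
  ⟨(dConn_of_dSep_of_dConn_union_singleton hE hsep hconn).symm,
    (dConn_of_dSep_of_dConn_union_singleton hE (fun h => hsep h.symm) hconn.symm).symm⟩

/-- step of the proof of Lemma 2: if `u, v` are d-separated
given `W` but d-connected given `W ∪ {x}`, then `x` is d-connected to both `u`
and `v` given `W`. -/
theorem stmt14 [Fintype V] (E : V → V → Prop) (hE : Acyclic E) (u v x : V) (W : Set V)
    (huv : u ≠ v) (hux : u ≠ x) (hvx : v ≠ x)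
    (hWu : u ∉ W) (hWv : v ∉ W) (hWx : x ∉ W)
    (hsep : DSep E W u v) (hconn : DConn E (W ∪ {x}) u v) :
    DConn E W x u ∧ DConn E W x v :=
  stmt14_general E hE u v x W hsep hconn
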